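/- arXiv:1012.1775 — 2 statements merged into one kernel-verified Lean document; each statement's English description precedes it below -/
import Mathlib

section
/- Piola identity: let v : ℝⁿ → ℝⁿ be twice continuously differentiable (ContDiff ℝ 2). Let C(x) = cof(Dv(x)) be the cofactor matrix of the Jacobian matrix Dv(x) = (∂_i v_j(x))_{ji}. Then every row of C is divergence free: for each j and each x, ∑_i ∂_i ( x ↦ C(x)_{ji} )(x) = 0. -/
/-!
The cofactor entry `(j, i)` is the determinant of `Dv` with row `j` replaced by `eᵢ`. Its
`∂ᵢ`-derivative is a sum over the other rows `k`, each replaced by `∂ᵢ ∇vₖ`, the `i`-th row of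
the Hessian of `vₖ`. For fixed `k` the sum over `i` then pairs the symmetric Hessian with the
alternating form `(u, w) ↦ det(Dv; row j ← u, row k ← w)`, hence vanishes.
-/

open Matrix

/-- The Jacobian matrix of a vector field `v : ℝⁿ → ℝⁿ`:
`(jacobian v x)_{ji} = ∂_i v_j (x)`. -/
noncomputable def jacobian {n : ℕ} (v : (Fin n → ℝ) → (Fin n → ℝ)) (x : Fin n → ℝ) :
    Matrix (Fin n) (Fin n) ℝ :=
  Matrix.of fun j i => fderiv ℝ (fun y => v y j) x (Pi.single i 1)

open Finset

namespace Matrix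

variable {ι R : Type*} [Fintype ι] [DecidableEq ι] [CommRing R]

theorem det_updateRow_updateRow_swap (A : Matrix ι ι R) {j k : ι} (hjk : j ≠ k) (u w : ι → R) :
    ((A.updateRow j u).updateRow k w).det = -((A.updateRow j w).updateRow k u).det := by
  have hperm : (A.updateRow j u).updateRow k w =
      ((A.updateRow j w).updateRow k u).submatrix (Equiv.swap j k) id := by
    ext a b
    rcases eq_or_ne a j with rfl | haj
    · simp [hjk]
    rcases eq_or_ne a k with rfl | hak
    · simp [hjk]
    · simp [updateRow_apply, haj, hak, Equiv.swap_apply_of_ne_of_ne]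
  rw [hperm, det_permute, Equiv.Perm.sign_swap hjk]
  simp

theorem det_updateRow_eq_sum (A : Matrix ι ι R) (k : ι) (c : ι → R) :
    (A.updateRow k c).det = ∑ l, c l * (A.updateRow k (Pi.single l 1)).det := by
  conv_lhs => rw [pi_eq_sum_univ' c]
  exact ((detRowAlternating : (ι → R) [⋀^ι]→ₗ[R] R).map_update_sum _ _ _ _).trans
    (sum_congr rfl fun l _ => det_updateRow_smul _ _ _ _)

theorem sum_det_updateRow_single_updateRow_eq_zero (A : Matrix ι ι R) {j k : ι} (hjk : j ≠ k)
    {H : Matrix ι ι R} (hH : H.IsSymm) :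
    ∑ i, ((A.updateRow j (Pi.single i 1)).updateRow k (H i)).det = 0 := by
  set B : ι → ι → R := fun i l =>
    ((A.updateRow j (Pi.single i 1)).updateRow k (Pi.single l 1)).det
  have hB_antisymm : ∀ i l, B l i = -B i l := fun i l => det_updateRow_updateRow_swap A hjk _ _
  have hB_diag : ∀ i, B i i = 0 := fun i => det_zero_of_row_eq hjk (by simp [updateRow_ne hjk])
  simp only [det_updateRow_eq_sum _ k (H _), ← sum_product']
  refine sum_involution (fun p _ => p.swap) (fun ⟨i, l⟩ _ => ?_)
    (fun ⟨i, l⟩ _ hne hswap => hne ?_) (by simp) (by simp)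
  · change H i l * B i l + H l i * B l i = 0
    rw [hH.apply, hB_antisymm]
    ring
  · obtain rfl : l = i := congrArg Prod.fst hswap
    change H l l * B l l = 0
    rw [hB_diag, mul_zero]

end Matrix

section Calculus

variable {𝕜 ι E : Type*} [NontriviallyNormedField 𝕜] [NormedAddCommGroup E] [NormedSpace 𝕜 E]

theorem fderiv_fderiv_apply_pi {f : E → 𝕜} {x : E} (hf : DifferentiableAt 𝕜 (fderiv 𝕜 f) x)
    (u : ι → E) (w : E) :
    fderiv 𝕜 (fun y l => fderiv 𝕜 f y (u l)) x w = fun l => fderiv 𝕜 (fderiv 𝕜 f) x w (u l) := by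
  rw [fderiv_pi fun l => hf.clm_apply (differentiableAt_const _)]
  ext l
  simp [fderiv_clm_apply hf (differentiableAt_const _)]

variable [Fintype ι] [DecidableEq ι]

variable (𝕜 ι) in
noncomputable def Matrix.detRowContinuousMultilinear :
    ContinuousMultilinearMap 𝕜 (fun _ : ι => ι → 𝕜) 𝕜 where
  toMultilinearMap := (detRowAlternating : (ι → 𝕜) [⋀^ι]→ₗ[𝕜] 𝕜).toMultilinearMap
  cont := continuous_id.matrix_det

theorem fderiv_det_apply {M : E → Matrix ι ι 𝕜} {x : E}
    (hM : ∀ k, DifferentiableAt 𝕜 (fun y => M y k) x) (w : E) :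
    fderiv 𝕜 (fun y => (M y).det) x w =
      ∑ k, ((M x).updateRow k (fderiv 𝕜 (fun y => M y k) x w)).det := by
  show fderiv 𝕜 (fun y => detRowContinuousMultilinear 𝕜 ι fun k => M y k) x w = _
  rw [(HasFDerivAt.multilinear_comp _ fun k => (hM k).hasFDerivAt).fderiv]
  simp only [FunLike.coe_sum, Finset.sum_apply, ContinuousLinearMap.comp_apply,
    ContinuousMultilinearMap.toContinuousLinearMap_apply]
  rfl

theorem fderiv_det_updateRow_apply {M : E → Matrix ι ι 𝕜} {x : E} {j : ι}
    (hM : ∀ k, k ≠ j → DifferentiableAt 𝕜 (fun y => M y k) x) (b : ι → 𝕜) (w : E) :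
    fderiv 𝕜 (fun y => ((M y).updateRow j b).det) x w =
      ∑ k ∈ univ.erase j,
        (((M x).updateRow j b).updateRow k (fderiv 𝕜 (fun y => M y k) x w)).det := by
  have hrow : ∀ k, (fun y => (M y).updateRow j b k) =
      if k = j then fun _ => b else fun y => M y k := by
    intro k
    split_ifs with hk
    · simp [hk]
    · simp [updateRow_ne hk]
  have hN : ∀ k, DifferentiableAt 𝕜 (fun y => (M y).updateRow j b k) x := by
    intro k
    rw [hrow]
    split_ifs with hk
    · exact differentiableAt_const _
    · exact hM k hk
  rw [fderiv_det_apply hN, ← add_sum_erase _ _ (mem_univ j)]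
  refine (add_eq_right.2 ?_).trans (sum_congr rfl fun k hk => ?_)
  · rw [hrow, if_pos rfl, fderiv_const_apply]
    exact det_eq_zero_of_row_eq_zero j (by simp)
  · rw [hrow, if_neg (ne_of_mem_erase hk)]

end Calculus

/-- Piola identity: if `v : ℝⁿ → ℝⁿ` is `C²`, then every row of the cofactor matrix
`cof (Dv) = (adjugate (Dv))ᵀ` of its Jacobian is divergence free:
`∑_i ∂_i (cof Dv)_{ji} = 0` for every `j` and every `x`. -/
theorem piola_identity {n : ℕ} (v : (Fin n → ℝ) → (Fin n → ℝ))
    (hv : ContDiff ℝ 2 v) (j : Fin n) (x : Fin n → ℝ) :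
    ∑ i, fderiv ℝ (fun y => ((jacobian v y).adjugate)ᵀ j i) x (Pi.single i 1) = 0 := by
  have hvk : ∀ k, ContDiff ℝ 2 (fun y => v y k) := contDiff_pi.1 hv
  have hD2 : ∀ k, DifferentiableAt ℝ (fderiv ℝ (fun y => v y k)) x := fun k =>
    ((hvk k).fderiv_right (m := 1) le_rfl).differentiable one_ne_zero x
  have hrow : ∀ k, DifferentiableAt ℝ (fun y => jacobian v y k) x := fun k =>
    differentiableAt_pi.2 fun l => (hD2 k).clm_apply (differentiableAt_const _)
  let hess : Fin n → Matrix (Fin n) (Fin n) ℝ := fun k => of fun i l =>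
    fderiv ℝ (fderiv ℝ (fun y => v y k)) x (Pi.single i 1) (Pi.single l 1)
  have hess_symm : ∀ k, (hess k).IsSymm := fun k => IsSymm.ext fun i l =>
    ((hvk k).contDiffAt.isSymmSndFDerivAt (by simp)) _ _
  have hrow_deriv : ∀ k i, fderiv ℝ (fun y => jacobian v y k) x (Pi.single i 1) = hess k i :=
    fun k i => fderiv_fderiv_apply_pi (hD2 k) _ _
  calc ∑ i, fderiv ℝ (fun y => ((jacobian v y).adjugate)ᵀ j i) x (Pi.single i 1)
      = ∑ i, ∑ k ∈ univ.erase j,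
          (((jacobian v x).updateRow j (Pi.single i 1)).updateRow k (hess k i)).det := by
        simp only [transpose_apply, adjugate_apply,
          fderiv_det_updateRow_apply fun k _ => hrow k, hrow_deriv]
    _ = ∑ k ∈ univ.erase j, ∑ i,
          (((jacobian v x).updateRow j (Pi.single i 1)).updateRow k (hess k i)).det := sum_comm
    _ = 0 := sum_eq_zero fun k hk =>
        sum_det_updateRow_single_updateRow_eq_zero _ (ne_of_mem_erase hk).symm (hess_symm k)
end

section
/- Divergence form of the linearized Monge–Ampère operator: let u : ℝⁿ → ℝ be three times continuously differentiable and w : ℝⁿ → ℝ twice continuously differentiable. Then for every x, ∑_i ∂_i ( y ↦ ∑_j cof(D²u(y))_{ij} ∂_j w(y) )(x) = ∑_{i,j} cof(D²u(x))_{ij} ∂_i ∂_j w(x); that is, div( (cof D²u) Dw ) = (cof D²u) : D²w. -/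
/-
The product rule gives div((cof D²u) Dw) = (cof D²u) : D²w + Dw · div(cof D²u), so everything
rests on the Piola identity div(cof D²u) = 0. The cofactor cof(D²u)_{ij} is the determinant of D²u
with row i replaced by e_j; differentiating it row by row, ∂_i cof(D²u)_{ij} is a sum over k ≠ i of
determinants in which row i is e_j and row k is ∂_i ∂_k Du. Since third derivatives are symmetric,
exchanging i and k only swaps two rows, so the terms (i, k) and (k, i) cancel.
-/

open Matrix

/-- The Hessian matrix of `u : ℝⁿ → ℝ`: `(hessian u x)_{ij} = ∂_i ∂_j u (x)`. -/
noncomputable def hessian {n : ℕ} (u : (Fin n → ℝ) → ℝ) (x : Fin n → ℝ) :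
    Matrix (Fin n) (Fin n) ℝ :=
  Matrix.of fun i j =>
    fderiv ℝ (fun y => fderiv ℝ u y (Pi.single j 1)) x (Pi.single i 1)

open Function Finset

namespace AlternatingMap

variable {R M N ι : Type*} [Semiring R] [AddCommMonoid M] [Module R M] [AddCommGroup N]
  [Module R N] [DecidableEq ι] (f : M [⋀^ι]→ₗ[R] N) (v : ι → M)

theorem map_update_update_swap {i k : ι} (hik : i ≠ k) (a b : M) :
    f (update (update v k a) i b) = -f (update (update v i a) k b) := by
  rw [← f.map_swap _ hik]
  congr 1
  funext l
  simp only [Function.comp_apply, update_apply, Equiv.swap_apply_def]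
  split_ifs <;> grind

theorem sum_sum_map_update_update_eq_zero [Fintype ι] (c : M) (D : ι → ι → M)
    (hD : ∀ i k, D i k = D k i) (hD_diag : ∀ i, D i i = 0) :
    ∑ i, ∑ k, f (update (update v i c) k (D i k)) = 0 := by
  rw [← Finset.sum_product' (s := univ) (t := univ)
    (f := fun i k => f (update (update v i c) k (D i k)))]
  refine Finset.sum_involution (fun p _ => p.swap) ?_ ?_ (by simp) (by simp)
  · rintro ⟨i, k⟩ -
    rcases eq_or_ne i k with rfl | hik
    · simp [hD_diag]
    · simp [hD k i, map_update_update_swap f v hik]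
  · rintro ⟨i, k⟩ - hne heq
    simp only [Prod.swap_prod_mk, Prod.mk.injEq] at heq
    obtain ⟨rfl, -⟩ := heq
    exact hne (by simp [hD_diag])

end AlternatingMap

section Calculus

variable {E F : Type*} [NormedAddCommGroup E] [NormedSpace ℝ E] [NormedAddCommGroup F]
  [NormedSpace ℝ F] {x : E}

theorem differentiableAt_fderiv_apply {f : E → F} (hf : ContDiffAt ℝ 2 f x) (v : E) :
    DifferentiableAt ℝ (fun y => fderiv ℝ f y v) x :=
  ((hf.fderiv_right (m := 1) le_rfl).differentiableAt one_ne_zero).clm_apply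
    (differentiableAt_const v)

theorem fderiv_fderiv_apply_comm {f : E → F} (hf : ContDiffAt ℝ 2 f x) (v w : E) :
    fderiv ℝ (fun y => fderiv ℝ f y w) x v = fderiv ℝ (fun y => fderiv ℝ f y v) x w := by
  have hf' : DifferentiableAt ℝ (fderiv ℝ f) x :=
    (hf.fderiv_right (m := 1) le_rfl).differentiableAt one_ne_zero
  have second_deriv (a b : E) :
      fderiv ℝ (fun y => fderiv ℝ f y b) x a = fderiv ℝ (fderiv ℝ f) x a b := by
    simp [fderiv_clm_apply hf' (differentiableAt_const b)]
  rw [second_deriv, second_deriv, (hf.isSymmSndFDerivAt (by simp)).eq]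

variable {ι : Type*} [DecidableEq ι]

theorem differentiableAt_updateRow_row {M : E → Matrix ι ι ℝ}
    (hM : ∀ k, DifferentiableAt ℝ (fun y => M y k) x) (i : ι) (c : ι → ℝ) (k : ι) :
    DifferentiableAt ℝ (fun y => (M y).updateRow i c k) x := by
  rcases eq_or_ne k i with rfl | hki
  · simp only [updateRow_self, differentiableAt_const]
  · simpa only [updateRow_ne hki] using hM k

variable [Fintype ι]

noncomputable def detRows : ContinuousMultilinearMap ℝ (fun _ : ι => ι → ℝ) ℝ where
  toMultilinearMap := (detRowAlternating (n := ι) (R := ℝ)).toMultilinearMap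
  cont := continuous_id.matrix_det

theorem hasFDerivAt_det_of_rows {M : E → Matrix ι ι ℝ}
    (hM : ∀ k, DifferentiableAt ℝ (fun y => M y k) x) :
    HasFDerivAt (fun y => (M y).det)
      (∑ k, (detRows.toContinuousLinearMap (M x) k) ∘L fderiv ℝ (fun y => M y k) x) x :=
  HasFDerivAt.multilinear_comp (f := detRows) fun k => (hM k).hasFDerivAt

theorem differentiableAt_det_of_rows {M : E → Matrix ι ι ℝ}
    (hM : ∀ k, DifferentiableAt ℝ (fun y => M y k) x) :
    DifferentiableAt ℝ (fun y => (M y).det) x :=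
  (hasFDerivAt_det_of_rows hM).differentiableAt

theorem differentiableAt_adjugate_of_rows {M : E → Matrix ι ι ℝ}
    (hM : ∀ k, DifferentiableAt ℝ (fun y => M y k) x) (i j : ι) :
    DifferentiableAt ℝ (fun y => (M y).adjugate i j) x := by
  simp only [adjugate_apply]
  exact differentiableAt_det_of_rows (differentiableAt_updateRow_row hM j _)

theorem fderiv_det_of_rows_apply {M : E → Matrix ι ι ℝ}
    (hM : ∀ k, DifferentiableAt ℝ (fun y => M y k) x) (v : E) :
    fderiv ℝ (fun y => (M y).det) x v
      = ∑ k, ((M x).updateRow k (fderiv ℝ (fun y => M y k) x v)).det := by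
  rw [(hasFDerivAt_det_of_rows hM).fderiv]
  simp only [FunLike.coe_sum, Finset.sum_apply, ContinuousLinearMap.coe_comp, Function.comp_apply]
  rfl

end Calculus

section Piola

variable {ι : Type*} [Fintype ι] [DecidableEq ι]

noncomputable def gradientMatrix (g : ι → (ι → ℝ) → ℝ) (x : ι → ℝ) : Matrix ι ι ℝ :=
  of fun k b => fderiv ℝ (g b) x (Pi.single k 1)

variable {g : ι → (ι → ℝ) → ℝ} {x : ι → ℝ}

theorem differentiableAt_gradientMatrix_row (hg : ∀ b, ContDiffAt ℝ 2 (g b) x) (k : ι) :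
    DifferentiableAt ℝ (fun y => gradientMatrix g y k) x :=
  differentiableAt_pi.2 fun b => differentiableAt_fderiv_apply (hg b) _

theorem fderiv_gradientMatrix_row_comm (hg : ∀ b, ContDiffAt ℝ 2 (g b) x) (i k : ι) :
    fderiv ℝ (fun y => gradientMatrix g y k) x (Pi.single i 1)
      = fderiv ℝ (fun y => gradientMatrix g y i) x (Pi.single k 1) := by
  change fderiv ℝ (fun y b => fderiv ℝ (g b) y (Pi.single k 1)) x (Pi.single i 1)
    = fderiv ℝ (fun y b => fderiv ℝ (g b) y (Pi.single i 1)) x (Pi.single k 1)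
  rw [fderiv_pi fun b => differentiableAt_fderiv_apply (hg b) _,
    fderiv_pi fun b => differentiableAt_fderiv_apply (hg b) _]
  funext b
  exact fderiv_fderiv_apply_comm (hg b) _ _

theorem piola_identity_s5 (hg : ∀ b, ContDiffAt ℝ 2 (g b) x) (j : ι) :
    ∑ i, fderiv ℝ (fun y => (gradientMatrix g y).adjugateᵀ i j) x (Pi.single i 1) = 0 := by
  set T : ι → ι → ι → ℝ := fun i k => fderiv ℝ (fun y => gradientMatrix g y k) x (Pi.single i 1)
  have hrow_deriv (i k : ι) :
      fderiv ℝ (fun y => (gradientMatrix g y).updateRow i (Pi.single j 1) k) x (Pi.single i 1)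
        = if k = i then 0 else T i k := by
    rcases eq_or_ne k i with rfl | hki
    · simp
    · simp [hki, T]
  calc ∑ i, fderiv ℝ (fun y => (gradientMatrix g y).adjugateᵀ i j) x (Pi.single i 1)
      = ∑ i, ∑ k, (((gradientMatrix g x).updateRow i (Pi.single j 1)).updateRow k
          (if k = i then 0 else T i k)).det := by
        refine sum_congr rfl fun i _ => ?_
        simp only [transpose_apply, adjugate_apply]
        rw [fderiv_det_of_rows_apply
          (differentiableAt_updateRow_row (differentiableAt_gradientMatrix_row hg) i _)]
        simp only [hrow_deriv]
    _ = 0 := by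
      have hsymm (i k : ι) : (if k = i then 0 else T i k) = if i = k then 0 else T k i := by
        rcases eq_or_ne k i with rfl | hki
        · rfl
        · simp [hki, hki.symm, T, fderiv_gradientMatrix_row_comm hg i k]
      exact (detRowAlternating.sum_sum_map_update_update_eq_zero (gradientMatrix g x)
        (Pi.single j 1) (fun i k => if k = i then 0 else T i k) hsymm (by simp) :)

end Piola

section ProductRule

variable {ι : Type*} [Fintype ι] [DecidableEq ι] {x : ι → ℝ}

theorem sum_fderiv_sum_mul {C : ι → ι → (ι → ℝ) → ℝ} {v : ι → (ι → ℝ) → ℝ}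
    (hC : ∀ i j, DifferentiableAt ℝ (C i j) x) (hv : ∀ j, DifferentiableAt ℝ (v j) x) :
    ∑ i, fderiv ℝ (fun y => ∑ j, C i j y * v j y) x (Pi.single i 1)
      = ∑ i, ∑ j, C i j x * fderiv ℝ (v j) x (Pi.single i 1)
        + ∑ j, v j x * ∑ i, fderiv ℝ (C i j) x (Pi.single i 1) := by
  have hsum (i : ι) : fderiv ℝ (fun y => ∑ j, C i j y * v j y) x (Pi.single i 1)
      = ∑ j, (C i j x * fderiv ℝ (v j) x (Pi.single i 1)
        + v j x * fderiv ℝ (C i j) x (Pi.single i 1)) := by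
    rw [fderiv_fun_sum (A := fun j y => C i j y * v j y) fun j _ => (hC i j).mul (hv j),
      _root_.sum_apply]
    refine sum_congr rfl fun j _ => ?_
    rw [fderiv_fun_mul (hC i j) (hv j)]
    rfl
  simp only [hsum, sum_add_distrib, mul_sum]
  congr 1
  exact sum_comm

end ProductRule

/-- Divergence form of the linearized Monge–Ampère operator: for `u : ℝⁿ → ℝ` of class `C³`
and `w : ℝⁿ → ℝ` of class `C²`,
`div((cof D²u) Dw) = (cof D²u) : D²w`, where `cof M = (adjugate M)ᵀ` is the cofactor matrix
and `M : N = ∑_{i,j} M_{ij} N_{ij}`. -/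
theorem div_cof_hessian_grad {n : ℕ} (u w : (Fin n → ℝ) → ℝ)
    (hu : ContDiff ℝ 3 u) (hw : ContDiff ℝ 2 w) (x : Fin n → ℝ) :
    ∑ i, fderiv ℝ
        (fun y => ∑ j, ((hessian u y).adjugate)ᵀ i j * fderiv ℝ w y (Pi.single j 1))
        x (Pi.single i 1)
      = ∑ i, ∑ j, ((hessian u x).adjugate)ᵀ i j * hessian w x i j := by
  set g : Fin n → (Fin n → ℝ) → ℝ := fun b y => fderiv ℝ u y (Pi.single b 1)
  have hg (b : Fin n) : ContDiffAt ℝ 2 (g b) x :=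
    ((hu.fderiv_right (m := 2) (by norm_num)).clm_apply contDiff_const).contDiffAt
  have hessian_eq : hessian u = gradientMatrix g := rfl
  rw [sum_fderiv_sum_mul (C := fun i j y => ((hessian u y).adjugate)ᵀ i j)
    (fun i j => differentiableAt_adjugate_of_rows (differentiableAt_gradientMatrix_row hg) j i)
    (fun j => differentiableAt_fderiv_apply hw.contDiffAt _), hessian_eq]
  simp only [piola_identity_s5 hg, mul_zero, sum_const_zero, add_zero]
  rfl
end
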